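/- arXiv:math/0607054 — 2 statements merged into one kernel-verified Lean document; each statement's English description precedes it below -/
import Mathlib

section
/- Let I > 0 and c ∈ (0,1]. Define h_c(l) = 2 c l² Φ(−l√(cI)/2) and the acceptance rate a^c(l) = 2Φ(−l√(cI)/2). If l̂_c maximizes h_c on [0,∞), then a^c(l̂_c) does not depend on c; that is, for any c, c' ∈ (0,1], a^c(l̂_c) = a^{c'}(l̂_{c'}). -/
/-!
At a maximiser `l > 0` of `h_c` the derivative vanishes; in terms of `x = -l√(cI)/2` this reads
`Φ(x)/φ(x) = -x/2`, and `a^c(l) = 2Φ(x)`. The Mills-type ratio `Φ/φ` is strictly increasing,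
because `φ(x) + xΦ(x) = ∫_{t ≤ x} (x - t) φ(t) dt > 0`, so this equation has at most one root `x`,
which therefore does not depend on `c`.
-/

open Real Set Filter MeasureTheory ProbabilityTheory

/-- Standard normal cumulative distribution function. -/
noncomputable def Phi (x : ℝ) : ℝ := ∫ t in Set.Iic x, Real.exp (-t^2/2) / Real.sqrt (2*Real.pi)

/-- Speed of the limiting diffusion for RWM-within-Gibbs. -/
noncomputable def hSpeed (I c l : ℝ) : ℝ := 2 * c * l^2 * Phi (-(l * Real.sqrt (c * I)) / 2)

/-- Asymptotic average acceptance rate of RWM-within-Gibbs. -/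
noncomputable def aRate (I c l : ℝ) : ℝ := 2 * Phi (-(l * Real.sqrt (c * I)) / 2)

open Topology

noncomputable def phi (x : ℝ) : ℝ := Real.exp (-x^2/2) / Real.sqrt (2*Real.pi)

lemma phi_pos (x : ℝ) : 0 < phi x := by
  unfold phi
  positivity

lemma continuous_phi : Continuous phi := by
  unfold phi
  fun_prop

lemma phi_eq_mul_exp (x : ℝ) : phi x = (Real.sqrt (2*Real.pi))⁻¹ * Real.exp (-(1/2) * x^2) := by
  unfold phi
  ring_nf

lemma integrable_phi : Integrable phi := by
  simpa only [← phi_eq_mul_exp] using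
    (integrable_exp_neg_mul_sq (by norm_num : (0:ℝ) < 1/2)).const_mul (Real.sqrt (2*Real.pi))⁻¹

lemma integrable_neg_mul_phi : Integrable (fun t => -t * phi t) := by
  refine ((integrable_mul_exp_neg_mul_sq (by norm_num : (0:ℝ) < 1/2)).const_mul
    (-(Real.sqrt (2*Real.pi))⁻¹)).congr (Eventually.of_forall fun t => ?_)
  simp only [phi_eq_mul_exp]
  ring

lemma hasDerivAt_phi (x : ℝ) : HasDerivAt phi (-x * phi x) x := by
  have h : HasDerivAt (fun x => Real.exp (-x^2/2) / Real.sqrt (2*Real.pi)) _ x :=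
    ((((hasDerivAt_pow 2 x).neg).div_const 2).exp).div_const _
  refine h.congr_deriv ?_
  simp only [Pi.neg_apply, phi]
  push_cast
  ring

lemma tendsto_phi_atBot : Tendsto phi atBot (𝓝 0) := by
  have h : Tendsto (fun x : ℝ => -x^2/2) atBot atBot := by
    refine tendsto_atBot_mono' atBot ?_ tendsto_id
    filter_upwards [eventually_le_atBot (-2:ℝ)] with x hx
    show -x^2/2 ≤ x
    nlinarith
  have h' := (Real.tendsto_exp_atBot.comp h).div_const (Real.sqrt (2*Real.pi))
  rwa [zero_div] at h'

lemma Phi_eq_setIntegral_phi (x : ℝ) : Phi x = ∫ t in Iic x, phi t := rfl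

lemma Phi_pos (x : ℝ) : 0 < Phi x := by
  rw [Phi_eq_setIntegral_phi, setIntegral_pos_iff_support_of_nonneg_ae
    (Eventually.of_forall fun t => (phi_pos t).le) integrable_phi.integrableOn,
    Function.support_eq_univ fun t => (phi_pos t).ne', univ_inter, Real.volume_Iic]
  exact ENNReal.zero_lt_top

lemma hasDerivAt_Phi (x : ℝ) : HasDerivAt Phi (phi x) x := by
  have hPhi : Phi = fun u => Phi 0 + ∫ t in (0:ℝ)..u, phi t := by
    funext u
    rw [← intervalIntegral.integral_Iic_sub_Iic integrable_phi.integrableOn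
      integrable_phi.integrableOn, ← Phi_eq_setIntegral_phi, ← Phi_eq_setIntegral_phi]
    ring
  rw [hPhi]
  exact (intervalIntegral.integral_hasDerivAt_right integrable_phi.intervalIntegrable
    (continuous_phi.stronglyMeasurableAtFilter _ _) continuous_phi.continuousAt).const_add _

lemma phi_eq_setIntegral_Iic (x : ℝ) : phi x = ∫ t in Iic x, -t * phi t := by
  rw [integral_Iic_of_hasDerivAt_of_tendsto (hasDerivAt_phi x).continuousAt.continuousWithinAt
    (fun t _ => hasDerivAt_phi t) integrable_neg_mul_phi.integrableOn tendsto_phi_atBot, sub_zero]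

lemma phi_add_mul_Phi_pos (x : ℝ) : 0 < phi x + x * Phi x := by
  have hint : Integrable (fun t => (x - t) * phi t) := by
    refine (integrable_neg_mul_phi.add (integrable_phi.const_mul x)).congr
      (Eventually.of_forall fun t => ?_)
    simp only [Pi.add_apply]
    ring
  have hrepr : phi x + x * Phi x = ∫ t in Iic x, (x - t) * phi t := by
    rw [phi_eq_setIntegral_Iic, Phi_eq_setIntegral_phi, ← integral_const_mul,
      ← integral_add integrable_neg_mul_phi.integrableOn (integrable_phi.integrableOn.const_mul x)]
    congr 1 with t
    ring
  have hsupport : Function.support (fun t => (x - t) * phi t) ∩ Iic x = Iio x := by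
    ext t
    simp [(phi_pos t).ne', sub_eq_zero, lt_iff_le_and_ne, and_comm, eq_comm]
  rw [hrepr, setIntegral_pos_iff_support_of_nonneg_ae _ hint.integrableOn, hsupport,
    Real.volume_Iio]
  · exact ENNReal.zero_lt_top
  · filter_upwards [ae_restrict_mem measurableSet_Iic] with t (ht : t ≤ x)
    exact mul_nonneg (sub_nonneg.2 ht) (phi_pos t).le

lemma strictMono_Phi_div_phi : StrictMono (fun x => Phi x / phi x) := by
  refine strictMono_of_deriv_pos fun x => ?_
  have h : HasDerivAt (fun x => Phi x / phi x) _ x :=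
    (hasDerivAt_Phi x).div (hasDerivAt_phi x) (phi_pos x).ne'
  rw [h.deriv, show phi x * phi x - Phi x * (-x * phi x) = phi x * (phi x + x * Phi x) by ring]
  exact div_pos (mul_pos (phi_pos x) (phi_add_mul_Phi_pos x)) (pow_pos (phi_pos x) 2)

lemma eq_of_Phi_div_phi_eq_neg_div_two {x y : ℝ} (hx : Phi x / phi x = -x / 2)
    (hy : Phi y / phi y = -y / 2) : x = y := by
  have hmono : StrictMono (fun x => Phi x / phi x + x / 2) :=
    strictMono_Phi_div_phi.add (strictMono_id.div_const two_pos)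
  exact hmono.injective (by simp only [hx, hy]; ring)

lemma hasDerivAt_hSpeed (I c l : ℝ) :
    HasDerivAt (hSpeed I c) (c * l * (4 * Phi (-(l * √(c * I)) / 2)
      - l * √(c * I) * phi (-(l * √(c * I)) / 2))) l := by
  have harg : HasDerivAt (fun l => -(l * √(c * I)) / 2) (-(1 * √(c * I)) / 2) l :=
    ((hasDerivAt_id l).mul_const _).neg.div_const 2
  have h : HasDerivAt (fun l => 2 * c * l ^ 2 * Phi (-(l * √(c * I)) / 2)) _ l :=
    ((hasDerivAt_pow 2 l).const_mul (2 * c)).mul ((hasDerivAt_Phi _).comp l harg)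
  refine h.congr_deriv ?_
  push_cast
  ring

lemma pos_of_isMaxOn_hSpeed {I c l : ℝ} (hc : 0 < c) (hl : 0 ≤ l)
    (hmax : IsMaxOn (hSpeed I c) (Ici 0) l) : 0 < l := by
  refine hl.lt_of_ne fun hl0 => ?_
  have h1 : hSpeed I c 1 ≤ hSpeed I c l := hmax (mem_Ici.2 zero_le_one)
  have h1_pos : 0 < hSpeed I c 1 := by
    unfold hSpeed
    have := Phi_pos (-(1 * √(c * I)) / 2)
    positivity
  have h0 : hSpeed I c l = 0 := by simp [← hl0, hSpeed]
  linarith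

lemma Phi_div_phi_eq_of_isMaxOn_hSpeed {I c l : ℝ} (hc : 0 < c) (hl : 0 ≤ l)
    (hmax : IsMaxOn (hSpeed I c) (Ici 0) l) :
    Phi (-(l * √(c * I)) / 2) / phi (-(l * √(c * I)) / 2) = -(-(l * √(c * I)) / 2) / 2 := by
  have hl_pos := pos_of_isMaxOn_hSpeed hc hl hmax
  have hcrit := (hmax.isLocalMax (Ici_mem_nhds hl_pos)).hasDerivAt_eq_zero
    (hasDerivAt_hSpeed I c l)
  rw [div_eq_iff (phi_pos _).ne']
  linarith [(mul_eq_zero.1 hcrit).resolve_left (mul_pos hc hl_pos).ne']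

theorem stmt1_general (I c c' : ℝ) (hc : c ∈ Set.Ioc (0:ℝ) 1) (hc' : c' ∈ Set.Ioc (0:ℝ) 1)
    (lc lc' : ℝ) (hlc : lc ∈ Set.Ici (0:ℝ)) (hlc' : lc' ∈ Set.Ici (0:ℝ))
    (hmaxc : IsMaxOn (hSpeed I c) (Set.Ici 0) lc)
    (hmaxc' : IsMaxOn (hSpeed I c') (Set.Ici 0) lc') :
    aRate I c lc = aRate I c' lc' := by
  unfold aRate
  rw [eq_of_Phi_div_phi_eq_neg_div_two (Phi_div_phi_eq_of_isMaxOn_hSpeed hc.1 hlc hmaxc)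
    (Phi_div_phi_eq_of_isMaxOn_hSpeed hc'.1 hlc' hmaxc')]

theorem stmt1 (I c c' : ℝ) (hI : 0 < I) (hc : c ∈ Set.Ioc (0:ℝ) 1) (hc' : c' ∈ Set.Ioc (0:ℝ) 1)
    (lc lc' : ℝ) (hlc : lc ∈ Set.Ici (0:ℝ)) (hlc' : lc' ∈ Set.Ici (0:ℝ))
    (hmaxc : IsMaxOn (hSpeed I c) (Set.Ici 0) lc)
    (hmaxc' : IsMaxOn (hSpeed I c') (Set.Ici 0) lc') :
    aRate I c lc = aRate I c' lc' :=
  stmt1_general I c c' hc hc' lc lc' hlc hlc' hmaxc hmaxc'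
end

section
/- Let A ∼ N(μ, σ²) with σ > 0. Then E[min(1, e^A)] = Φ(μ/σ) + e^{μ + σ²/2} Φ(−σ − μ/σ), where Φ is the standard normal CDF. -/
open Real Set Filter MeasureTheory ProbabilityTheory

/-!
Split the expectation at `A = 0`. On `{A > 0}` the integrand is `1`, contributing
`P(A > 0) = Φ(μ/σ)`. On `{A ≤ 0}` it is `e^A`, and completing the square shows that `e^x` times
the `N(μ, σ²)` density is `e^{μ + σ²/2}` times the `N(μ + σ², σ²)` density, so this part
contributes `e^{μ + σ²/2} P(N(μ + σ², σ²) ≤ 0) = e^{μ + σ²/2} Φ(-σ - μ/σ)`.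
-/

open scoped NNReal

lemma gaussianReal_real_eq_setIntegral (m : ℝ) {v : ℝ≥0} (hv : v ≠ 0) (s : Set ℝ) :
    (gaussianReal m v).real s = ∫ x in s, gaussianPDFReal m v x := by
  rw [measureReal_def, gaussianReal_apply_eq_integral m hv,
    ENNReal.toReal_ofReal (integral_nonneg fun x => gaussianPDFReal_nonneg m v x)]

lemma Phi_eq_gaussianReal_real_Iic (x : ℝ) : Phi x = (gaussianReal 0 1).real (Iic x) := by
  rw [gaussianReal_real_eq_setIntegral 0 one_ne_zero, Phi]
  simp [gaussianPDFReal_def, div_eq_inv_mul]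

lemma gaussianReal_map_standardize (m : ℝ) {v : ℝ≥0} (hv : v ≠ 0) :
    (gaussianReal m v).map (fun x => (x - m) / √v) = gaussianReal 0 1 := by
  have hsub := gaussianReal_map_sub_const (μ := m) (v := v) m
  have hdiv := gaussianReal_map_div_const (μ := m - m) (v := v) (√v)
  rw [← Function.comp_def (fun x => x / √v), ← Measure.map_map (by fun_prop) (by fun_prop), hsub,
    hdiv, sub_self, zero_div]
  congr
  ext
  simp [Real.sq_sqrt, hv]

lemma gaussianReal_real_Iic (m : ℝ) {v : ℝ≥0} (hv : v ≠ 0) (a : ℝ) :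
    (gaussianReal m v).real (Iic a) = Phi ((a - m) / √v) := by
  have hpre : (fun x => (x - m) / √v) ⁻¹' Iic ((a - m) / √v) = Iic a := by
    ext x
    simp [div_le_div_iff_of_pos_right (Real.sqrt_pos.2 (NNReal.coe_pos.2 (pos_iff_ne_zero.2 hv)))]
  rw [Phi_eq_gaussianReal_real_Iic, ← gaussianReal_map_standardize m hv,
    map_measureReal_apply (by fun_prop) measurableSet_Iic, hpre]

lemma gaussianReal_real_Ioi (m : ℝ) {v : ℝ≥0} (hv : v ≠ 0) (a : ℝ) :
    (gaussianReal m v).real (Ioi a) = Phi ((m - a) / √v) := by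
  have : NullSingletonClass (gaussianReal (-m) v) := nullSingletonClass_gaussianReal hv
  rw [← neg_neg m, ← gaussianReal_map_neg, map_measureReal_apply (by fun_prop) measurableSet_Ioi,
    neg_preimage, neg_Ioi, measureReal_congr Iio_ae_eq_Iic, gaussianReal_real_Iic _ hv]
  ring_nf

lemma gaussianPDFReal_mul_exp (m : ℝ) {v : ℝ≥0} (hv : v ≠ 0) (x : ℝ) :
    gaussianPDFReal m v x * exp x = exp (m + v / 2) * gaussianPDFReal (m + v) v x := by
  simp only [gaussianPDFReal_def]
  rw [mul_left_comm, mul_assoc, ← Real.exp_add, ← Real.exp_add]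
  congr 2
  have : (v : ℝ) ≠ 0 := by exact_mod_cast hv
  field_simp
  ring

lemma setIntegral_exp_gaussianReal (m : ℝ) {v : ℝ≥0} (hv : v ≠ 0) {s : Set ℝ}
    (hs : MeasurableSet s) :
    ∫ x in s, exp x ∂gaussianReal m v = exp (m + v / 2) * (gaussianReal (m + v) v).real s := by
  rw [← integral_indicator hs, integral_gaussianReal_eq_integral_smul hv]
  simp_rw [← indicator_smul_apply, smul_eq_mul, gaussianPDFReal_mul_exp m hv]
  rw [integral_indicator hs, integral_const_mul, gaussianReal_real_eq_setIntegral _ hv]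

lemma integrable_min_one_exp {μ : Measure ℝ} [IsFiniteMeasure μ] :
    Integrable (fun x => min 1 (exp x)) μ :=
  Integrable.of_bound (by fun_prop) 1 (ae_of_all _ fun x => by
    rw [Real.norm_of_nonneg (le_min zero_le_one (exp_nonneg x))]
    exact min_le_left _ _)

lemma integral_min_one_exp_gaussianReal (m : ℝ) {v : ℝ≥0} (hv : v ≠ 0) :
    ∫ x, min 1 (exp x) ∂gaussianReal m v
      = Phi (m / √v) + exp (m + v / 2) * Phi (-√v - m / √v) := by
  have hsqrt : √(v : ℝ) ≠ 0 := by positivity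
  rw [← intervalIntegral.integral_Iic_add_Ioi (b := 0) integrable_min_one_exp.integrableOn
      integrable_min_one_exp.integrableOn,
    setIntegral_congr_fun measurableSet_Iic fun x hx => min_eq_right (exp_le_one_iff.2 hx),
    setIntegral_congr_fun measurableSet_Ioi fun x hx => min_eq_left (one_le_exp (le_of_lt hx)),
    setIntegral_exp_gaussianReal m hv measurableSet_Iic, setIntegral_const, smul_eq_mul, mul_one,
    gaussianReal_real_Iic _ hv, gaussianReal_real_Ioi _ hv, sub_zero, add_comm]
  congr 3
  field_simp
  rw [Real.sq_sqrt v.coe_nonneg]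
  ring

theorem stmt6 (μ σ : ℝ) (hσ : 0 < σ) :
    ∫ x, min 1 (Real.exp x) ∂(gaussianReal μ (Real.toNNReal (σ^2)))
      = Phi (μ/σ) + Real.exp (μ + σ^2/2) * Phi (-σ - μ/σ) := by
  have hv : (σ ^ 2).toNNReal ≠ 0 := by positivity
  rw [integral_min_one_exp_gaussianReal μ hv, Real.coe_toNNReal _ (sq_nonneg σ),
    Real.sqrt_sq hσ.le]
end
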